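/- Let e be an m-linear preregular form on an n-dimensional vector space V. Then there exists an m-linear form ẽ on V such that for all indices i, j: Σ_{i_1,...,i_{m-1}} ẽ_{i i_1 ... i_{m-1}} e_{i_1 ... i_{m-1} j} = δ_{ij}, where e_{j_1...j_m} = e(v_{j_1},...,v_{j_m}) with respect to a fixed basis. That is, the n × n^{m-1} 'matrix' of e admits a left inverse arising from an m-linear form. -/

import Mathlib

/-!
Let `Φ : V → k^(n^p)` send `v` to the coefficients `t ↦ e(v_{t_1}, …, v_{t_p}, v)`. Twisted
cyclicity turns nondegeneracy of `e` in its first slot into nondegeneracy in its last slot, so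
`Φ` is injective and has a linear left inverse `L`. The form with coefficients
`ẽ_{i t} = coord_i (L (δ_t))` does the job, since `∑_t ẽ_{i t} e_{t j} = coord_i (L (Φ v_j))`.
-/

open Module

theorem Module.Basis.exists_multilinearMap_apply_basis_eq {R M ι κ : Type*} [CommRing R]
    [AddCommGroup M] [Module R M] [Fintype ι] [Finite κ] (b : Basis κ R M)
    (f : (ι → κ) → R) :
    ∃ F : MultilinearMap R (fun _ : ι => M) R, ∀ s : ι → κ, F (b ∘ s) = f s := by
  classical
  have := Fintype.ofFinite κ
  refine ⟨∑ s, f s • Basis.multilinearMap (fun _ => b) (Basis.singleton Unit R) (s, ()), ?_⟩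
  intro s
  simp [Basis.multilinearMap_apply_apply, Finsupp.single_apply, Finset.prod_boole, ← funext_iff]

namespace MultilinearMap

variable {R V : Type*} [CommRing R] [AddCommGroup V] [Module R V] {p : ℕ}
  (e : MultilinearMap R (fun _ : Fin (p + 1) => V) R)

theorem eq_zero_of_forall_snoc_eq_zero (ψ : V ≃ₗ[R] V)
    (hcyc : ∀ g : Fin (p + 1) → V, e g = e (Fin.cons (ψ (g (Fin.last p))) (g ∘ Fin.castSucc)))
    (hnd : ∀ v : V, (∀ w : Fin p → V, e (Fin.cons v w) = 0) → v = 0)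
    {v : V} (hv : ∀ w : Fin p → V, e (Fin.snoc w v) = 0) : v = 0 := by
  refine ψ.map_eq_zero_iff.mp (hnd _ fun w => ?_)
  simpa [hcyc (Fin.snoc w v)] using hv w

theorem snoc_eq_zero_of_forall_snoc_basis_eq_zero {κ : Type*} (b : Basis κ R V) {v : V}
    (hv : ∀ t : Fin p → κ, e (Fin.snoc (b ∘ t) v) = 0) (w : Fin p → V) :
    e (Fin.snoc w v) = 0 := by
  have hzero : (LinearMap.applyₗ v).compMultilinearMap e.curryRight = 0 :=
    Basis.ext_multilinear (fun _ => b) fun t => hv t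
  simpa using congr($hzero w)

end MultilinearMap

theorem preregular_has_multilinear_left_inverse_general
    {k : Type*} [Field k] {V : Type*} [AddCommGroup V] [Module k V]
    {n : ℕ} (b : Module.Basis (Fin n) k V)
    (p : ℕ)
    (e : MultilinearMap k (fun _ : Fin (p + 1) => V) k)
    -- preregularity (a): nondegeneracy in the first slot
    (hnd : ∀ v : V, (∀ w : Fin p → V, e (Fin.cons v w) = 0) → v = 0)
    -- preregularity (b): twisted cyclicity
    (hcyc : ∃ ψ : V ≃ₗ[k] V, ∀ g : Fin (p + 1) → V,
      e g = e (Fin.cons (ψ (g (Fin.last p))) (g ∘ Fin.castSucc))) :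
    ∃ etilde : MultilinearMap k (fun _ : Fin (p + 1) => V) k,
      ∀ i j : Fin n,
        (∑ t : Fin p → Fin n,
          etilde (Fin.cons (b i) (b ∘ t)) * e (Fin.snoc (b ∘ t) (b j)))
        = if i = j then (1 : k) else 0 := by
  obtain ⟨ψ, hψ⟩ := hcyc
  let Φ : V →ₗ[k] (Fin p → Fin n) → k := LinearMap.pi fun t => e.curryRight (b ∘ t)
  have hΦ : LinearMap.ker Φ = ⊥ := LinearMap.ker_eq_bot'.mpr fun v hv =>
    e.eq_zero_of_forall_snoc_eq_zero ψ hψ hnd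
      (e.snoc_eq_zero_of_forall_snoc_basis_eq_zero b fun t => congr_fun hv t)
  obtain ⟨L, hL⟩ := Φ.exists_leftInverse_of_injective hΦ
  obtain ⟨etilde, hetilde⟩ := b.exists_multilinearMap_apply_basis_eq
    fun s => b.coord (s 0) (L (Pi.single (Fin.tail s) 1))
  refine ⟨etilde, fun i j => ?_⟩
  calc ∑ t, etilde (Fin.cons (b i) (b ∘ t)) * e (Fin.snoc (b ∘ t) (b j))
      = b.coord i (L (∑ t, Φ (b j) t • Pi.single t 1)) := by
        simp [← Fin.comp_cons, hetilde, Φ, mul_comm]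
    _ = if i = j then 1 else 0 := by
        rw [← pi_eq_sum_univ']
        change b.coord i ((L ∘ₗ Φ) (b j)) = _
        rw [hL]
        simp [Finsupp.single_apply, eq_comm]

/-- If `e` is an `m`-linear preregular form (here `m = p + 1 ≥ 2`) on an
`n`-dimensional vector space `V` with basis `b`, then there is an `m`-linear form `etilde`
on `V` with `∑_{i_1,…,i_{m-1}} etilde_{i i_1 ⋯ i_{m-1}} e_{i_1 ⋯ i_{m-1} j} = δ_{ij}`. -/
theorem preregular_has_multilinear_left_inverse
    {k : Type*} [Field k] {V : Type*} [AddCommGroup V] [Module k V]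
    {n : ℕ} (b : Module.Basis (Fin n) k V)
    (p : ℕ) (hp : 1 ≤ p)
    (e : MultilinearMap k (fun _ : Fin (p + 1) => V) k)
    -- preregularity (a): nondegeneracy in the first slot
    (hnd : ∀ v : V, (∀ w : Fin p → V, e (Fin.cons v w) = 0) → v = 0)
    -- preregularity (b): twisted cyclicity
    (hcyc : ∃ ψ : V ≃ₗ[k] V, ∀ g : Fin (p + 1) → V,
      e g = e (Fin.cons (ψ (g (Fin.last p))) (g ∘ Fin.castSucc))) :
    ∃ etilde : MultilinearMap k (fun _ : Fin (p + 1) => V) k,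
      ∀ i j : Fin n,
        (∑ t : Fin p → Fin n,
          etilde (Fin.cons (b i) (b ∘ t)) * e (Fin.snoc (b ∘ t) (b j)))
        = if i = j then (1 : k) else 0 :=
  preregular_has_multilinear_left_inverse_general b p e hnd hcyc
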